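/- arXiv:2311.10667 — 3 statements merged into one kernel-verified Lean document; each statement's English description precedes it below -/
import Mathlib

section
/- Let v ∈ ℂⁿ be nonzero, c ∈ ℂⁿ, and let F(z) = z·v + c. For any constant (1,1)-form φ = Σ_{k,ℓ} ξ_{k,ℓ} dz_k ∧ dz̄_ℓ on ℂⁿ with complex coefficients ξ_{k,ℓ}, one has ∫_{D_R} F*φ = −2iπR² Σ_{k,ℓ} v_k ξ_{k,ℓ} v̄_ℓ for every R > 0. Consequently the normalized integral (∫_{D_R} F*φ) / (∫_{D_R} F*ω) equals −2i Σ_{k,ℓ} v_k ξ_{k,ℓ} v̄_ℓ / ‖v‖², independent of R and c. -/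
open MeasureTheory Complex

/- The derivative of `F(z) = z·v + c` is the constant vector `v`, so the density of `F*φ`
is the constant `−2i Σ v_k ξ_{kℓ} v̄_ℓ` and its integral over `D_R` is that constant times
the area `πR²`; in the quotient by `∫_{D_R} F*ω = πR²‖v‖²` the area cancels. -/

theorem Complex.volume_real_ball (a : ℂ) {r : ℝ} (hr : 0 ≤ r) :
    volume.real (Metric.ball a r) = Real.pi * r ^ 2 := by
  rw [measureReal_def, Complex.volume_ball, ENNReal.toReal_mul, ENNReal.toReal_pow,
    ENNReal.toReal_ofReal hr, ENNReal.coe_toReal, NNReal.coe_real_pi, mul_comm]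

theorem Complex.setIntegral_ball_const {E : Type*} [NormedAddCommGroup E] [NormedSpace ℂ E]
    [CompleteSpace E] (a : ℂ) {r : ℝ} (hr : 0 ≤ r) (e : E) :
    ∫ _ in Metric.ball a r, e = ((Real.pi * r ^ 2 : ℝ) : ℂ) • e := by
  rw [setIntegral_const, Complex.volume_real_ball a hr, Complex.coe_smul]

theorem fderiv_smul_const_add_const_apply_one {𝕜 E : Type*} [NontriviallyNormedField 𝕜]
    [NormedAddCommGroup E] [NormedSpace 𝕜 E] (v c : E) (z : 𝕜) :
    fderiv 𝕜 (fun w : 𝕜 => w • v + c) z 1 = v := by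
  have h : HasFDerivAt (fun w : 𝕜 => w • v + c) ((1 : 𝕜 →L[𝕜] 𝕜).smulRight v) z :=
    ((hasFDerivAt_id z).smul_const v).add_const c
  simp [h.fderiv]

theorem stmt5_general (n : ℕ) (v c : EuclideanSpace ℂ (Fin n)) (R : ℝ) (hR : 0 < R)
    (ξ : Fin n → Fin n → ℂ)
    (F : ℂ → EuclideanSpace ℂ (Fin n)) (hF : ∀ z j, F z j = z * v j + c j) :
    (∫ z in Metric.ball (0 : ℂ) R,
        ∑ k, ∑ l, ξ k l * (fderiv ℂ F z 1 k) * (starRingEnd ℂ) (fderiv ℂ F z 1 l) * (-2 * I))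
      = -2 * I * Real.pi * (R : ℂ) ^ 2 * ∑ k, ∑ l, v k * ξ k l * (starRingEnd ℂ) (v l) ∧
    (∫ z in Metric.ball (0 : ℂ) R,
        ∑ k, ∑ l, ξ k l * (fderiv ℂ F z 1 k) * (starRingEnd ℂ) (fderiv ℂ F z 1 l) * (-2 * I))
        / ((Real.pi * R ^ 2 * ‖v‖ ^ 2 : ℝ) : ℂ)
      = -2 * I * (∑ k, ∑ l, v k * ξ k l * (starRingEnd ℂ) (v l)) / ((‖v‖ ^ 2 : ℝ) : ℂ) := by
  have hF' : F = fun z => z • v + c := by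
    funext z; ext j; simpa using hF z j
  set S := ∑ k, ∑ l, v k * ξ k l * (starRingEnd ℂ) (v l)
  have hintegrand : ∀ z, ∑ k, ∑ l, ξ k l * (fderiv ℂ F z 1 k) *
      (starRingEnd ℂ) (fderiv ℂ F z 1 l) * (-2 * I) = -2 * I * S := by
    intro z
    simp only [hF', fderiv_smul_const_add_const_apply_one, S, Finset.mul_sum]
    exact Finset.sum_congr rfl fun k _ => Finset.sum_congr rfl fun l _ => by ring
  have hintegral : (∫ z in Metric.ball (0 : ℂ) R, ∑ k, ∑ l, ξ k l * (fderiv ℂ F z 1 k) *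
      (starRingEnd ℂ) (fderiv ℂ F z 1 l) * (-2 * I)) = -2 * I * Real.pi * (R : ℂ) ^ 2 * S := by
    simp only [hintegrand, Complex.setIntegral_ball_const 0 hR.le, smul_eq_mul]
    push_cast
    ring
  refine ⟨hintegral, ?_⟩
  rw [hintegral]
  have harea : ((Real.pi * R ^ 2 : ℝ) : ℂ) ≠ 0 := by
    exact_mod_cast (mul_pos Real.pi_pos (pow_pos hR 2)).ne'
  calc -2 * I * Real.pi * (R : ℂ) ^ 2 * S / ((Real.pi * R ^ 2 * ‖v‖ ^ 2 : ℝ) : ℂ)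
      = ((Real.pi * R ^ 2 : ℝ) : ℂ) * (-2 * I * S)
          / (((Real.pi * R ^ 2 : ℝ) : ℂ) * ((‖v‖ ^ 2 : ℝ) : ℂ)) := by push_cast; ring
    _ = -2 * I * S / ((‖v‖ ^ 2 : ℝ) : ℂ) := mul_div_mul_left _ _ harea

/-- For the affine curve `F(z) = z·v + c` and a constant `(1,1)`-form
`φ = Σ ξ_{kℓ} dz_k ∧ dz̄_ℓ`, the pullback `F*φ` has density
`Σ ξ_{kℓ} F_k'(z) conj(F_ℓ'(z)) · (−2i)` with respect to Lebesgue measure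
(since `dz ∧ dz̄ = −2i dx ∧ dy`), and its integral over `D_R` equals
`−2iπR² Σ v_k ξ_{kℓ} v̄_ℓ`.  Consequently the area-normalized integral equals
`−2i Σ v_k ξ_{kℓ} v̄_ℓ / ‖v‖²`, independent of `R` and `c`. -/
theorem stmt5 (n : ℕ) (v c : EuclideanSpace ℂ (Fin n)) (hv : v ≠ 0) (R : ℝ) (hR : 0 < R)
    (ξ : Fin n → Fin n → ℂ)
    (F : ℂ → EuclideanSpace ℂ (Fin n)) (hF : ∀ z j, F z j = z * v j + c j) :
    (∫ z in Metric.ball (0 : ℂ) R,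
        ∑ k, ∑ l, ξ k l * (fderiv ℂ F z 1 k) * (starRingEnd ℂ) (fderiv ℂ F z 1 l) * (-2 * I))
      = -2 * I * Real.pi * (R : ℂ) ^ 2 * ∑ k, ∑ l, v k * ξ k l * (starRingEnd ℂ) (v l) ∧
    (∫ z in Metric.ball (0 : ℂ) R,
        ∑ k, ∑ l, ξ k l * (fderiv ℂ F z 1 k) * (starRingEnd ℂ) (fderiv ℂ F z 1 l) * (-2 * I))
        / ((Real.pi * R ^ 2 * ‖v‖ ^ 2 : ℝ) : ℂ)
      = -2 * I * (∑ k, ∑ l, v k * ξ k l * (starRingEnd ℂ) (v l)) / ((‖v‖ ^ 2 : ℝ) : ℂ) :=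
  stmt5_general n v c R hR ξ F hF
end

section
/- Let g be a holomorphic function on an open set containing the closed disc D(z_0, r). Then the image g(D(z_0, r)) contains some open disc of radius r·|g'(z_0)|/72. -/
/-!
Maximising `(r - |z - z₀|) |g'(z)|` over the closed disc yields a point `a` and a radius
`t = (r - |a - z₀|) / 2` with `r |g'(z₀)| ≤ 2 t |g'(a)|` and `|g'| ≤ 2 |g'(a)|` on `D(a, t)`.
There the mean value inequality bounds the first-order Taylor remainder of `g` at `a` by
`3 |g'(a)| |z - a|`, and since the remainder is `o(|z - a|)` the Schwarz lemma improves this to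
`3 |g'(a)| |z - a|² / t`. Hence `|g(z) - g(a)| ≥ |g'(a)| t / 12` on the circle `|z - a| = t / 6`,
and the maximum-modulus argument behind the open mapping theorem puts the disc of radius
`|g'(a)| t / 24 ≥ r |g'(z₀)| / 48` around `g(a)` into the image.
-/

open Metric Set Filter Topology

theorem ContinuousOn.exists_closedBall_subset_forall_le_two_mul {X : Type*}
    [PseudoMetricSpace X] [ProperSpace X] {f : X → ℝ} {x₀ : X} {r : ℝ} (hr : 0 ≤ r)
    (hf : ContinuousOn f (closedBall x₀ r)) (hf₀ : ∀ x ∈ closedBall x₀ r, 0 ≤ f x) :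
    ∃ a t, closedBall a (2 * t) ⊆ closedBall x₀ r ∧ r * f x₀ ≤ 2 * t * f a ∧
      ∀ x ∈ ball a t, f x ≤ 2 * f a := by
  obtain ⟨a, -, hmax⟩ := (isCompact_closedBall x₀ r).exists_isMaxOn (nonempty_closedBall.2 hr)
    (f := fun x ↦ (r - dist x x₀) * f x)
    ((continuous_const.sub (continuous_id.dist continuous_const)).continuousOn.mul hf)
  set t := (r - dist a x₀) / 2 with ht
  have hfa : (r - dist a x₀) * f a = 2 * t * f a := by rw [ht]; ring
  refine ⟨a, t, closedBall_subset_closedBall' (by linarith), ?_, fun x hx ↦ ?_⟩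
  · simpa [hfa] using hmax (mem_closedBall_self hr)
  have hxa : dist x a < t := hx
  have hx₀ : t < r - dist x x₀ := by linarith [dist_triangle x a x₀]
  have hxB : x ∈ closedBall x₀ r := by
    rw [mem_closedBall]; linarith [dist_nonneg (x := x) (y := a)]
  have hfx : (r - dist x x₀) * f x ≤ 2 * t * f a := hfa ▸ hmax hxB
  nlinarith [hf₀ x hxB, dist_nonneg (x := x) (y := a)]

theorem norm_sub_sub_smul_deriv_le {E : Type*} [NormedAddCommGroup E] [NormedSpace ℂ E]
    {f : ℂ → E} {a z : ℂ} {R M : ℝ}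
    (hf : DifferentiableOn ℂ f (ball a R)) (hM : ∀ w ∈ ball a R, ‖deriv f w‖ ≤ M)
    (hz : z ∈ ball a R) :
    ‖f z - f a - (z - a) • deriv f a‖ ≤ (M + ‖deriv f a‖) * R * (‖z - a‖ / R) ^ 2 := by
  have ha : a ∈ ball a R := mem_ball_self (pos_of_mem_ball hz)
  have hdiff : ∀ w ∈ ball a R, DifferentiableAt ℂ f w := fun w hw ↦
    hf.differentiableAt (isOpen_ball.mem_nhds hw)
  set φ : ℂ → E := fun w ↦ f w - f a - (w - a) • deriv f a
  have hφ_maps : MapsTo φ (ball a R) (closedBall (φ a) ((M + ‖deriv f a‖) * R)) := by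
    intro w hw
    have hmvt := (convex_ball a R).norm_image_sub_le_of_norm_deriv_le hdiff hM ha hw
    have hwa : ‖w - a‖ < R := by rwa [← dist_eq_norm]
    have hM₀ : ‖deriv f a‖ ≤ M := hM a ha
    rw [mem_closedBall, dist_eq_norm]
    calc ‖φ w - φ a‖ ≤ ‖f w - f a‖ + ‖(w - a) • deriv f a‖ := by simpa [φ] using norm_sub_le _ _
      _ ≤ (M + ‖deriv f a‖) * ‖w - a‖ := by rw [norm_smul]; linarith
      _ ≤ (M + ‖deriv f a‖) * R := by gcongr; linarith [norm_nonneg (deriv f a)]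
  have hφ_o : (φ · - φ a) =o[𝓝 a] (fun w ↦ ‖w - a‖ ^ 1) := by
    simpa [φ] using (hdiff a ha).hasDerivAt.isLittleO.norm_right
  have hφ_diff : DifferentiableOn ℂ φ (ball a R) :=
    (hf.sub_const _).sub ((differentiableOn_id.sub_const a).smul_const _)
  simpa [φ, dist_eq_norm] using
    Complex.dist_le_mul_div_pow_of_mapsTo_ball_of_isLittleO hφ_diff hφ_maps hφ_o hz

theorem ball_subset_image_closedBall_of_norm_deriv_le {f : ℂ → ℂ} {a : ℂ} {R M s : ℝ}
    (hf : DifferentiableOn ℂ f (ball a R)) (hM : ∀ z ∈ ball a R, ‖deriv f z‖ ≤ M)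
    (hs : 0 < s) (hsR : s < R) :
    ball (f a) ((‖deriv f a‖ - (M + ‖deriv f a‖) * (s / R)) * s / 2) ⊆ f '' closedBall a s := by
  set μ := ‖deriv f a‖
  have hR : 0 < R := hs.trans hsR
  have hsub : closedBall a s ⊆ ball a R := closedBall_subset_ball hsR
  have hsphere : ∀ z ∈ sphere a s, (μ - (M + μ) * (s / R)) * s ≤ ‖f z - f a‖ := by
    intro z hz
    have hza : ‖z - a‖ = s := by rwa [← dist_eq_norm, ← mem_sphere]
    have hrem := norm_sub_sub_smul_deriv_le hf hM (hsub (sphere_subset_closedBall hz))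
    have hlin : ‖(z - a) • deriv f a‖ = μ * s := by rw [norm_smul, hza, mul_comm]
    have htri := norm_le_norm_add_norm_sub (f z - f a) ((z - a) • deriv f a)
    have hsq : (M + μ) * R * (s / R) ^ 2 = (M + μ) * (s / R) * s := by field_simp
    rw [hza] at hrem
    linarith
  rcases eq_or_ne μ 0 with hμ | hμ
  · have hM₀ : 0 ≤ M := (norm_nonneg _).trans (hM a (mem_ball_self hR))
    have : 0 ≤ M * (s / R) * s := by positivity
    rw [ball_eq_empty.2 (by rw [hμ]; linarith)]
    exact empty_subset _
  have hne : ∃ᶠ z in 𝓝 a, f z ≠ f a :=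
    ((hf.differentiableAt (isOpen_ball.mem_nhds (mem_ball_self hR))).hasDerivAt.eventually_ne
      (norm_ne_zero_iff.1 hμ)).frequently.filter_mono nhdsWithin_le_nhds
  exact (hf.diffContOnCl_ball hsub).ball_subset_image_closedBall hs hsphere hne

/-- Bloch's theorem with constant 1/72: if `g` is holomorphic on an open set containing the
closed disc `D(z₀, r)`, then `g(D(z₀, r))` contains some open disc of radius
`r · |g'(z₀)| / 72`. -/
theorem bloch (g : ℂ → ℂ) (z₀ : ℂ) (r : ℝ) (hr : 0 < r)
    (V : Set ℂ) (hV : IsOpen V) (hsub : Metric.closedBall z₀ r ⊆ V)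
    (hg : DifferentiableOn ℂ g V) :
    ∃ w : ℂ, Metric.ball w (r * ‖deriv g z₀‖ / 72) ⊆ g '' Metric.closedBall z₀ r := by
  have hcont : ContinuousOn (fun z ↦ ‖deriv g z‖) (closedBall z₀ r) :=
    ((hg.deriv hV).continuousOn.mono hsub).norm
  obtain ⟨a, t, hat, hrt, hbound⟩ :=
    hcont.exists_closedBall_subset_forall_le_two_mul hr.le fun _ _ ↦ norm_nonneg _
  set μ := ‖deriv g a‖
  have hμ : 0 ≤ μ := norm_nonneg _
  rcases le_or_gt t 0 with ht | ht
  · refine ⟨g a, ?_⟩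
    rw [ball_eq_empty.2 (by nlinarith)]
    exact empty_subset _
  have hball : ball a t ⊆ closedBall z₀ r :=
    ball_subset_closedBall.trans ((closedBall_subset_closedBall (by linarith)).trans hat)
  have himage := ball_subset_image_closedBall_of_norm_deriv_le (hg.mono (hball.trans hsub)) hbound
    (by positivity : 0 < t / 6) (by linarith)
  have hrad : r * ‖deriv g z₀‖ / 72 ≤ (μ - (2 * μ + μ) * (t / 6 / t)) * (t / 6) / 2 := by
    rw [show (μ - (2 * μ + μ) * (t / 6 / t)) * (t / 6) / 2 = t * μ / 24 by field_simp; ring]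
    nlinarith
  refine ⟨g a, (ball_subset_ball hrad).trans (himage.trans (image_mono ?_))⟩
  exact (closedBall_subset_closedBall (by linarith)).trans hat
end

section
/- Let X be a compact complex manifold with Hermitian form ω, and let f : ℂ → X be an entire curve. Suppose (T_s)_{s≥1} is a sequence of Ahlfors currents on X, each generated by a sequence of concentric holomorphic discs f|_{closed D_r} satisfying the length-area condition Length_ω(f(∂D_r))/Area_ω(f(D_r)) → 0, and suppose T_s converges weakly to a current T. Then T is itself an Ahlfors current generated by some sequence of concentric discs f|_{closed D_{r_k}} with r_k → ∞ and Length_ω(f(∂D_{r_k}))/Area_ω(f(D_{r_k})) → 0. -/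
/-!
Test everything on a dense sequence `e` of forms and record the disc of radius `ρ` by the point
`(ratio ρ, (u ρ (e n))ₙ)` of the metrizable space `ℝ × (ℕ → ℝ)`. Because the masses are uniformly
bounded, convergence on `e` already gives weak convergence, so Ahlfors currents correspond exactly
to the cluster points of this curve as `ρ → ∞`. The set of cluster points is closed, and that is
the diagonal argument.
-/

open Filter Topology

/-- Abstract framework for Ahlfors currents of a fixed entire curve `f : ℂ → X`:
`Ω` is the (separable normed) space of smooth `(1,1)`-test forms on the compact manifold `X`,
`u r` is the mass-normalized integration current of the holomorphic disc `f|_{D̄_r}`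
(a continuous functional of norm `≤ 1`), and `ratio r` is the length-area ratio
`Length_ω(f(∂D_r)) / Area_ω(f(D_r))`.  `T` is an Ahlfors current generated by concentric
discs if it is the weak limit of `u (r k)` along radii `r k → ∞` with `ratio (r k) → 0`. -/
def IsAhlforsCurrent {Ω : Type*} [NormedAddCommGroup Ω] [NormedSpace ℝ Ω]
    (u : ℝ → Ω →L[ℝ] ℝ) (ratio : ℝ → ℝ) (T : Ω →L[ℝ] ℝ) : Prop :=
  ∃ r : ℕ → ℝ, Tendsto r atTop atTop ∧ Tendsto (fun k => ratio (r k)) atTop (𝓝 0) ∧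
    ∀ η : Ω, Tendsto (fun k => u (r k) η) atTop (𝓝 (T η))

theorem tendsto_apply_of_tendsto_apply_denseRange {ι α 𝕜 E F : Type*} [NontriviallyNormedField 𝕜]
    [NormedAddCommGroup E] [NormedSpace 𝕜 E] [NormedAddCommGroup F] [NormedSpace 𝕜 F]
    {l : Filter ι} {A : ι → E →L[𝕜] F} {C : ℝ} (hA : ∀ i, ‖A i‖ ≤ C) (B : E →L[𝕜] F)
    {e : α → E} (he : DenseRange e) (h : ∀ n, Tendsto (fun i => A i (e n)) l (𝓝 (B (e n))))
    (x : E) : Tendsto (fun i => A i x) l (𝓝 (B x)) := by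
  have hequi : Equicontinuous ((↑) ∘ A) :=
    ((NormedSpace.equicontinuous_TFAE A).out 5 1).mp (⟨C, hA⟩ : ∃ C, ∀ i, ‖A i‖ ≤ C)
  exact he.induction_on x (hequi.isClosed_setOfPred_tendsto B.continuous) h

section AhlforsCurrent

variable {Ω : Type*} [NormedAddCommGroup Ω] [NormedSpace ℝ Ω]

def discProfile (u : ℝ → Ω →L[ℝ] ℝ) (ratio : ℝ → ℝ) (e : ℕ → Ω) (ρ : ℝ) : ℝ × (ℕ → ℝ) :=
  (ratio ρ, fun n => u ρ (e n))

theorem isAhlforsCurrent_iff_mapClusterPt {u : ℝ → Ω →L[ℝ] ℝ} {C : ℝ} (hmass : ∀ r, ‖u r‖ ≤ C)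
    (ratio : ℝ → ℝ) {e : ℕ → Ω} (he : DenseRange e) (T : Ω →L[ℝ] ℝ) :
    IsAhlforsCurrent u ratio T ↔
      MapClusterPt (0, fun n => T (e n)) atTop (discProfile u ratio e) := by
  constructor
  · rintro ⟨r, hr, hratio, hconv⟩
    exact .of_comp hr (hratio.prodMk_nhds (tendsto_pi_nhds.2 fun n => hconv (e n))).mapClusterPt
  · intro hcluster
    obtain ⟨r, hprofile, hr⟩ := hcluster.exists_seq_tendsto
    exact ⟨r, hr, hprofile.fst_nhds, tendsto_apply_of_tendsto_apply_denseRange (fun _ => hmass _) T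
      he fun n => tendsto_pi_nhds.1 hprofile.snd_nhds n⟩

end AhlforsCurrent

/-- A weak limit of Ahlfors currents of the same entire curve, produced by concentric discs,
is again an Ahlfors current produced by concentric discs. -/
theorem stmt14 {Ω : Type*} [NormedAddCommGroup Ω] [NormedSpace ℝ Ω]
    [TopologicalSpace.SeparableSpace Ω]
    (u : ℝ → Ω →L[ℝ] ℝ) (ratio : ℝ → ℝ)
    (hmass : ∀ r, ‖u r‖ ≤ 1)
    (T : ℕ → Ω →L[ℝ] ℝ) (hT : ∀ s, IsAhlforsCurrent u ratio (T s))
    (Tlim : Ω →L[ℝ] ℝ) (hlim : ∀ η : Ω, Tendsto (fun s => T s η) atTop (𝓝 (Tlim η))) :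
    IsAhlforsCurrent u ratio Tlim := by
  set e := TopologicalSpace.denseSeq Ω
  have he : DenseRange e := TopologicalSpace.denseRange_denseSeq Ω
  simp only [isAhlforsCurrent_iff_mapClusterPt hmass ratio he] at hT ⊢
  exact isClosed_setOfPred_clusterPt.mem_of_tendsto
    (tendsto_const_nhds.prodMk_nhds (tendsto_pi_nhds.2 fun n => hlim (e n))) (.of_forall hT)
end
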